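/- Consider the augmented system (f_A, g_A, h_A) on ℝ × ℝ^{n_A} built from infinitely differentiable F : ℝ×ℝ^n → ℝ^n, G : ℝ×ℝ^n → ℝ^{n×r}, h : ℝ×ℝ^n → ℝ^m with r = m. Suppose there exist σ ∈ ℕ^m with σ_k ≥ 1 and a point (t_0, x_A^0) ∈ ℝ × ℝ^{n_A} such that, for each k ∈ {1,…,m}: L_{g_A} L_{f_A}^{i} h_{A,k}(t,x_A) = 0 for all (t,x_A) and all 0 ≤ i ≤ σ_k − 2, and L_{g_A} L_{f_A}^{σ_k−1} h_{A,k}(t_0, x_A^0) ≠ 0. Define Γ_{g_A}(t,x_A) ∈ ℝ^{m×m} as the matrix whose k-th row is L_{g_A} L_{f_A}^{σ_k−1} h_{A,k}(t,x_A). Then at every (t,x_A) with x_A = (x,z̃) such that z_i^{(0)} = 0 for some i ∈ {1,…,r}, the i-th column of Γ_{g_A}(t,x_A) is zero; in particular Γ_{g_A}(t,x_A) does not have full column rank and is not invertible. -/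

import Mathlib

noncomputable section

open Real Finset

/-- One-step Lie derivative of a scalar function `ψ` along the time-varying vector field `F`
on a general state space: `L_F ψ (t,x) = (∂ₓ ψ)·F + ∂ₜ ψ`, expressed as the total (Fréchet)
derivative of `ψ` in the direction `(1, F(t,x))`. -/
def lieF {E : Type*} [NormedAddCommGroup E] [NormedSpace ℝ E]
    (F : ℝ × E → E) (ψ : ℝ × E → ℝ) : ℝ × E → ℝ :=
  fun p => fderiv ℝ ψ p (1, F p)

/-- Iterated Lie derivative `L_F^j ψ`, with `L_F^0 ψ = ψ`. -/
def lieFIter {E : Type*} [NormedAddCommGroup E] [NormedSpace ℝ E]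
    (F : ℝ × E → E) (ψ : ℝ × E → ℝ) (j : ℕ) : ℝ × E → ℝ :=
  (lieF F)^[j] ψ

/-- Mixed Lie derivative `L_Ĝ ψ (t,x) = (∂ₓ ψ)(t,x)·Ĝ(t,x) ∈ ℝ^{1×r}` as a row vector,
where the matrix field `Ĝ` is given through its columns `Ĝ(t,x) j ∈ E`. -/
def lieGcol {E : Type*} [NormedAddCommGroup E] [NormedSpace ℝ E] {r : ℕ}
    (G : ℝ × E → Fin r → E) (ψ : ℝ × E → ℝ) : ℝ × E → Fin r → ℝ :=
  fun p j => fderiv ℝ ψ p (0, G p j)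

/-- The augmented state space `x_A = (x, z̃)`, where `z̃` stacks the scalars
`z_k^{(0)}, …, z_k^{(ρ_k-1)}` for `k = 1,…,m`. -/
abbrev AugState (n m : ℕ) (ρ : Fin m → ℕ) : Type :=
  (Fin n → ℝ) × (∀ k : Fin m, Fin (ρ k) → ℝ)

/-- The augmented vector field `f_A`: first block `F(t,x)`; the `k`-th slack block is the
shift `(z_k^{(1)}, …, z_k^{(ρ_k-1)}, 0)`. -/
def augF {n m : ℕ} (ρ : Fin m → ℕ) (F : ℝ × (Fin n → ℝ) → Fin n → ℝ) :
    ℝ × AugState n m ρ → AugState n m ρ :=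
  fun p =>
    (F (p.1, p.2.1),
      fun k i => if hi : (i : ℕ) + 1 < ρ k then p.2.2 k ⟨(i : ℕ) + 1, hi⟩ else 0)

/-- The columns of the augmented input matrix `g_A`: first `n` rows `G(t,x)·D(z)` with
`D(z) = diag(z_1^{(0)},…,z_r^{(0)})`; remaining rows zero, except that the row in the slot
of `z_k^{(ρ_k-1)}` equals the `k`-th standard basis row. -/
def augG {n m : ℕ} (ρ : Fin m → ℕ) (G : ℝ × (Fin n → ℝ) → Fin n → Fin m → ℝ) :
    ℝ × AugState n m ρ → Fin m → AugState n m ρ :=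
  fun p j =>
    ((fun a => G (p.1, p.2.1) a j *
        (if h : 0 < ρ j then p.2.2 j ⟨0, h⟩ else 0)),
      fun k i => if k = j ∧ (i : ℕ) = ρ k - 1 then 1 else 0)

/-- The augmented output `h_A(t,(x,z̃)) = h(t,x)`, `l`-th component. -/
def augH {n m : ℕ} (ρ : Fin m → ℕ) (h : ℝ × (Fin n → ℝ) → Fin m → ℝ) (l : Fin m) :
    ℝ × AugState n m ρ → ℝ :=
  fun p => h (p.1, p.2.1) l

/-- The integral augmented state space `x_I = (x_A, ξ)`. -/
abbrev IntState (n m : ℕ) (ρ : Fin m → ℕ) : Type :=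
  AugState n m ρ × (Fin m → ℝ)

/-- The bounded saturation function `s_β(v) = 2β(1/(e^{-v}+1) - 1/2)` (Eq. (16) of the paper). -/
def sBeta (β v : ℝ) : ℝ := 2 * β * (1 / (Real.exp (-v) + 1) - 1 / 2)

/-- The integral augmented vector field `f_I(t,(x_A,ξ)) = (f_A(t,x_A) + g_A(t,x_A)·s_β(ξ), 0)`. -/
def intF {n m : ℕ} (ρ : Fin m → ℕ) (F : ℝ × (Fin n → ℝ) → Fin n → ℝ)
    (G : ℝ × (Fin n → ℝ) → Fin n → Fin m → ℝ) (β : ℝ) :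
    ℝ × IntState n m ρ → IntState n m ρ :=
  fun p =>
    (augF ρ F (p.1, p.2.1) + ∑ j, sBeta β (p.2.2 j) • augG ρ G (p.1, p.2.1) j, 0)

/-- The columns of the integral augmented input matrix `g_I = (0 ; I_m)`. -/
def intG {n m : ℕ} (ρ : Fin m → ℕ) :
    ℝ × IntState n m ρ → Fin m → IntState n m ρ :=
  fun _ j => (0, Pi.single j 1)

/-- The integral augmented output `h_I(t,(x_A,ξ)) = h_A(t,x_A)`, `l`-th component. -/
def intH {n m : ℕ} (ρ : Fin m → ℕ) (h : ℝ × (Fin n → ℝ) → Fin m → ℝ) (l : Fin m) :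
    ℝ × IntState n m ρ → ℝ :=
  fun p => augH ρ h l (p.1, p.2.1)

/-!
The output `h_A` and the `x`-block `F` of `f_A` depend on `(t, x)` only, so every
`L_{f_A}^j h_{A,k}` is the pullback of `L_F^j h_k` along `(t, x_A) ↦ (t, x)`. Its derivative
along a column of `g_A` therefore only sees the `x`-block of that column, which for column `i`
is `G(t,x) e_i · z_i^{(0)}` and vanishes on the boundary `z_i^{(0)} = 0`. A square matrix with
a zero column is singular and rank deficient.
-/

section Pullback

variable {E E' : Type*} [NormedAddCommGroup E] [NormedSpace ℝ E]
  [NormedAddCommGroup E'] [NormedSpace ℝ E']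

theorem contDiff_lieF {F : ℝ × E → E} {ψ : ℝ × E → ℝ} (hF : ContDiff ℝ (⊤ : ℕ∞) F)
    (hψ : ContDiff ℝ (⊤ : ℕ∞) ψ) : ContDiff ℝ (⊤ : ℕ∞) (lieF F ψ) :=
  (hψ.fderiv_right (by exact_mod_cast le_top)).clm_apply (contDiff_const.prodMk hF)

theorem lieFIter_succ (F : ℝ × E → E) (ψ : ℝ × E → ℝ) (j : ℕ) :
    lieFIter F ψ (j + 1) = lieF F (lieFIter F ψ j) :=
  Function.iterate_succ_apply' _ _ _

theorem contDiff_lieFIter {F : ℝ × E → E} {ψ : ℝ × E → ℝ} (hF : ContDiff ℝ (⊤ : ℕ∞) F)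
    (hψ : ContDiff ℝ (⊤ : ℕ∞) ψ) (j : ℕ) : ContDiff ℝ (⊤ : ℕ∞) (lieFIter F ψ j) := by
  induction j with
  | zero => exact hψ
  | succ j ih =>
    rw [lieFIter_succ]
    exact contDiff_lieF hF ih

def timeLift (L : E' →L[ℝ] E) : ℝ × E' →L[ℝ] ℝ × E :=
  (ContinuousLinearMap.id ℝ ℝ).prodMap L

theorem fderiv_comp_timeLift (L : E' →L[ℝ] E) {ψ : ℝ × E → ℝ} {p : ℝ × E'}
    (hψ : DifferentiableAt ℝ ψ (timeLift L p)) (v : ℝ × E') :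
    fderiv ℝ (ψ ∘ timeLift L) p v = fderiv ℝ ψ (timeLift L p) (timeLift L v) := by
  rw [fderiv_comp p hψ (timeLift L).differentiableAt, (timeLift L).fderiv]
  rfl

theorem lieF_comp_timeLift {F : ℝ × E → E} {F' : ℝ × E' → E'} (L : E' →L[ℝ] E)
    (hFF' : ∀ p, L (F' p) = F (timeLift L p)) {ψ : ℝ × E → ℝ} (hψ : Differentiable ℝ ψ) :
    lieF F' (ψ ∘ timeLift L) = lieF F ψ ∘ timeLift L := by
  funext p
  simp only [lieF, Function.comp_apply, fderiv_comp_timeLift L (hψ _)]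
  rw [← hFF']
  rfl

theorem lieFIter_comp_timeLift {F : ℝ × E → E} {F' : ℝ × E' → E'} (L : E' →L[ℝ] E)
    (hFF' : ∀ p, L (F' p) = F (timeLift L p)) (hF : ContDiff ℝ (⊤ : ℕ∞) F)
    {ψ : ℝ × E → ℝ} (hψ : ContDiff ℝ (⊤ : ℕ∞) ψ) (j : ℕ) :
    lieFIter F' (ψ ∘ timeLift L) j = lieFIter F ψ j ∘ timeLift L := by
  induction j with
  | zero => rfl
  | succ j ih =>
    have hψj := (contDiff_lieFIter hF hψ j).differentiable (by simp)
    rw [lieFIter_succ, lieFIter_succ, ih, lieF_comp_timeLift L hFF' hψj]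

theorem lieGcol_comp_timeLift {r : ℕ} (G' : ℝ × E' → Fin r → E') (L : E' →L[ℝ] E)
    {ψ : ℝ × E → ℝ} (hψ : Differentiable ℝ ψ) (p : ℝ × E') (j : Fin r) :
    lieGcol G' (ψ ∘ timeLift L) p j = fderiv ℝ ψ (timeLift L p) (0, L (G' p j)) :=
  fderiv_comp_timeLift L (hψ _) _

end Pullback

open scoped Matrix in
theorem Matrix.rank_lt_card_width_of_col_eq_zero {R l n : Type*} [Field R] [Fintype l]
    [Fintype n] [DecidableEq n] (A : Matrix l n R) (j : n) (h : ∀ i, A i j = 0) :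
    A.rank < Fintype.card n := by
  rw [← A.rank_transpose]
  calc Aᵀ.rank ≤ (Finset.univ.erase j).card := by
        refine Aᵀ.rank_le_card_of_support_subset _ fun j' hj' => ?_
        exact Finset.mem_erase.mpr ⟨fun hj => hj' (hj ▸ funext h), Finset.mem_univ _⟩
    _ < Fintype.card n := Finset.card_erase_lt_of_mem (Finset.mem_univ j)

section Augmented

variable {n m : ℕ} (ρ : Fin m → ℕ)

theorem lieFIter_augF_augH {F : ℝ × (Fin n → ℝ) → Fin n → ℝ}
    {h : ℝ × (Fin n → ℝ) → Fin m → ℝ} (hF : ContDiff ℝ (⊤ : ℕ∞) F)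
    (hh : ContDiff ℝ (⊤ : ℕ∞) h) (k : Fin m) (j : ℕ) :
    lieFIter (augF ρ F) (augH ρ h k) j
      = lieFIter F (fun q => h q k) j ∘ timeLift (ContinuousLinearMap.fst ℝ _ _) :=
  lieFIter_comp_timeLift (F' := augF ρ F) (ContinuousLinearMap.fst ℝ _ _) (fun _ => rfl) hF
    (contDiff_pi.mp hh k) j

theorem fst_augG_eq_zero (G : ℝ × (Fin n → ℝ) → Fin n → Fin m → ℝ) (t : ℝ) (x : Fin n → ℝ)
    {z : ∀ k : Fin m, Fin (ρ k) → ℝ} {i : Fin m} (hi : 0 < ρ i) (hz : z i ⟨0, hi⟩ = 0) :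
    (augG ρ G (t, (x, z)) i).1 = 0 := by
  funext a
  simp [augG, dif_pos hi, hz]

theorem lieGcol_augG_lieFIter_augH_eq_zero {F : ℝ × (Fin n → ℝ) → Fin n → ℝ}
    (G : ℝ × (Fin n → ℝ) → Fin n → Fin m → ℝ) {h : ℝ × (Fin n → ℝ) → Fin m → ℝ}
    (hF : ContDiff ℝ (⊤ : ℕ∞) F) (hh : ContDiff ℝ (⊤ : ℕ∞) h) (k : Fin m) (j : ℕ)
    (t : ℝ) (x : Fin n → ℝ) {z : ∀ k : Fin m, Fin (ρ k) → ℝ} {i : Fin m} (hi : 0 < ρ i)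
    (hz : z i ⟨0, hi⟩ = 0) :
    lieGcol (augG ρ G) (lieFIter (augF ρ F) (augH ρ h k) j) (t, (x, z)) i = 0 := by
  have hψ := (contDiff_lieFIter hF (contDiff_pi.mp hh k) j).differentiable (by simp)
  rw [lieFIter_augF_augH ρ hF hh, lieGcol_comp_timeLift _ _ hψ, ContinuousLinearMap.coe_fst',
    fst_augG_eq_zero ρ G t x hi hz, Prod.mk_zero_zero, map_zero]

end Augmented

theorem augmented_gamma_loses_rank_on_boundary_general
    {n m : ℕ} (ρ : Fin m → ℕ) (hρ : ∀ k, 1 ≤ ρ k)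
    (F : ℝ × (Fin n → ℝ) → Fin n → ℝ)
    (G : ℝ × (Fin n → ℝ) → Fin n → Fin m → ℝ)
    (h : ℝ × (Fin n → ℝ) → Fin m → ℝ)
    (hF : ContDiff ℝ (⊤ : ℕ∞) F)
    (hh : ContDiff ℝ (⊤ : ℕ∞) h)
    (σ : Fin m → ℕ)
    (t : ℝ) (x : Fin n → ℝ) (z : ∀ k : Fin m, Fin (ρ k) → ℝ)
    (i₀ : Fin m) (hz : z i₀ ⟨0, hρ i₀⟩ = 0) :
    (∀ k : Fin m,
      lieGcol (augG ρ G) (lieFIter (augF ρ F) (augH ρ h k) (σ k - 1)) (t, (x, z)) i₀ = 0) ∧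
    ((Matrix.of fun k i =>
        lieGcol (augG ρ G) (lieFIter (augF ρ F) (augH ρ h k) (σ k - 1)) (t, (x, z)) i :
      Matrix (Fin m) (Fin m) ℝ)).rank < m ∧
    ¬ IsUnit ((Matrix.of fun k i =>
        lieGcol (augG ρ G) (lieFIter (augF ρ F) (augH ρ h k) (σ k - 1)) (t, (x, z)) i :
      Matrix (Fin m) (Fin m) ℝ)) := by
  set Γ : Matrix (Fin m) (Fin m) ℝ := Matrix.of fun k i =>
    lieGcol (augG ρ G) (lieFIter (augF ρ F) (augH ρ h k) (σ k - 1)) (t, (x, z)) i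
  have hcol : ∀ k, Γ k i₀ = 0 :=
    fun k => lieGcol_augG_lieFIter_augH_eq_zero ρ G hF hh k (σ k - 1) t x (hρ i₀) hz
  refine ⟨hcol, ?_, ?_⟩
  · simpa using Γ.rank_lt_card_width_of_col_eq_zero i₀ hcol
  · rw [Matrix.isUnit_iff_isUnit_det, Matrix.det_eq_zero_of_column_eq_zero i₀ hcol]
    exact not_isUnit_zero

/-- **Proposition 1 of the paper (FBL is incompatible with augmentation).**
If the augmented system has (local) relative degree `σ`, then on the constraint boundary,
i.e. wherever some slack variable `z_{i₀}^{(0)}` vanishes, the decoupling matrix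
`Γ_{g_A}`, whose `k`-th row is `L_{g_A} L_{f_A}^{σ_k-1} h_{A,k}`, has a zero `i₀`-th
column; in particular it does not have full column rank and is not invertible. -/
theorem augmented_gamma_loses_rank_on_boundary
    {n m : ℕ} (ρ : Fin m → ℕ) (hρ : ∀ k, 1 ≤ ρ k)
    (F : ℝ × (Fin n → ℝ) → Fin n → ℝ)
    (G : ℝ × (Fin n → ℝ) → Fin n → Fin m → ℝ)
    (h : ℝ × (Fin n → ℝ) → Fin m → ℝ)
    (hF : ContDiff ℝ (⊤ : ℕ∞) F) (hG : ContDiff ℝ (⊤ : ℕ∞) G)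
    (hh : ContDiff ℝ (⊤ : ℕ∞) h)
    (σ : Fin m → ℕ) (hσ : ∀ k, 1 ≤ σ k)
    (hzero : ∀ k : Fin m, ∀ i : ℕ, i + 2 ≤ σ k →
      ∀ p : ℝ × AugState n m ρ,
        lieGcol (augG ρ G) (lieFIter (augF ρ F) (augH ρ h k) i) p = 0)
    (t₀ : ℝ) (xA₀ : AugState n m ρ)
    (hne : ∀ k : Fin m,
      lieGcol (augG ρ G) (lieFIter (augF ρ F) (augH ρ h k) (σ k - 1)) (t₀, xA₀) ≠ 0)
    (t : ℝ) (x : Fin n → ℝ) (z : ∀ k : Fin m, Fin (ρ k) → ℝ)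
    (i₀ : Fin m) (hz : z i₀ ⟨0, hρ i₀⟩ = 0) :
    (∀ k : Fin m,
      lieGcol (augG ρ G) (lieFIter (augF ρ F) (augH ρ h k) (σ k - 1)) (t, (x, z)) i₀ = 0) ∧
    ((Matrix.of fun k i =>
        lieGcol (augG ρ G) (lieFIter (augF ρ F) (augH ρ h k) (σ k - 1)) (t, (x, z)) i :
      Matrix (Fin m) (Fin m) ℝ)).rank < m ∧
    ¬ IsUnit ((Matrix.of fun k i =>
        lieGcol (augG ρ G) (lieFIter (augF ρ F) (augH ρ h k) (σ k - 1)) (t, (x, z)) i :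
      Matrix (Fin m) (Fin m) ℝ)) :=
  augmented_gamma_loses_rank_on_boundary_general ρ hρ F G h hF hh σ t x z i₀ hz
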